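/- Let (G,ψ) be a Γ-gain graph and let H₁, H₂ be connected subgraphs of G such that H₁ ∩ H₂ is connected and has no fixed cut-vertex; set H = H₁ ∪ H₂. If ⟨H₁⟩ ≅ ℤ_p for some prime p and H₁ ∩ H₂ is unbalanced, then ⟨H₁⟩ ≅ ⟨H₁ ∩ H₂⟩ and ⟨H₂⟩ ≅ ⟨H⟩. -/

import Mathlib

open scoped Classical

namespace GR

/-- A finite directed multigraph with edge labels ("gains") in a group `Γ` and a
designated finite set of fixed vertices. -/
structure GainedGraph (V E Γ : Type) where
  tail : E → V
  head : E → V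
  gain : E → Γ
  fixed : Finset V

variable {V E Γ : Type} [DecidableEq V] [DecidableEq E] [Fintype V] [Fintype E] [Group Γ]

/-- A subgraph: a set of vertices and a set of edges whose endpoints lie in the vertex set. -/
structure Subgraph (G : GainedGraph V E Γ) where
  verts : Finset V
  edges : Finset E
  tail_mem : ∀ e ∈ edges, G.tail e ∈ verts
  head_mem : ∀ e ∈ edges, G.head e ∈ verts

namespace Subgraph

variable {G : GainedGraph V E Γ}

instance : Top (Subgraph G) :=
  ⟨⟨Finset.univ, Finset.univ, fun _ _ => Finset.mem_univ _, fun _ _ => Finset.mem_univ _⟩⟩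

instance : LE (Subgraph G) :=
  ⟨fun H K => H.verts ⊆ K.verts ∧ H.edges ⊆ K.edges⟩

def union (H K : Subgraph G) : Subgraph G where
  verts := H.verts ∪ K.verts
  edges := H.edges ∪ K.edges
  tail_mem e he := by
    rcases Finset.mem_union.1 he with h | h
    · exact Finset.mem_union_left _ (H.tail_mem e h)
    · exact Finset.mem_union_right _ (K.tail_mem e h)
  head_mem e he := by
    rcases Finset.mem_union.1 he with h | h
    · exact Finset.mem_union_left _ (H.head_mem e h)
    · exact Finset.mem_union_right _ (K.head_mem e h)

def inter (H K : Subgraph G) : Subgraph G where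
  verts := H.verts ∩ K.verts
  edges := H.edges ∩ K.edges
  tail_mem e he := by
    rcases Finset.mem_inter.1 he with ⟨h1, h2⟩
    exact Finset.mem_inter.2 ⟨H.tail_mem e h1, K.tail_mem e h2⟩
  head_mem e he := by
    rcases Finset.mem_inter.1 he with ⟨h1, h2⟩
    exact Finset.mem_inter.2 ⟨H.head_mem e h1, K.head_mem e h2⟩

/-- Delete a vertex together with all edges incident to it. -/
def deleteVertex (H : Subgraph G) (v : V) : Subgraph G where
  verts := H.verts.erase v
  edges := H.edges.filter fun e => G.tail e ≠ v ∧ G.head e ≠ v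
  tail_mem e he := by
    rcases Finset.mem_filter.1 he with ⟨h1, h2, h3⟩
    exact Finset.mem_erase.2 ⟨h2, H.tail_mem e h1⟩
  head_mem e he := by
    rcases Finset.mem_filter.1 he with ⟨h1, h2, h3⟩
    exact Finset.mem_erase.2 ⟨h3, H.head_mem e h1⟩

/-- Delete an edge. -/
def deleteEdge (H : Subgraph G) (f : E) : Subgraph G where
  verts := H.verts
  edges := H.edges.erase f
  tail_mem e he := H.tail_mem e (Finset.mem_of_mem_erase he)
  head_mem e he := H.head_mem e (Finset.mem_of_mem_erase he)

/-- Add an edge (together with its endpoints). -/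
def addEdge (H : Subgraph G) (f : E) : Subgraph G where
  verts := insert (G.tail f) (insert (G.head f) H.verts)
  edges := insert f H.edges
  tail_mem e he := by
    rcases Finset.mem_insert.1 he with rfl | h
    · exact Finset.mem_insert_self _ _
    · exact Finset.mem_insert_of_mem (Finset.mem_insert_of_mem (H.tail_mem e h))
  head_mem e he := by
    rcases Finset.mem_insert.1 he with rfl | h
    · exact Finset.mem_insert_of_mem (Finset.mem_insert_self _ _)
    · exact Finset.mem_insert_of_mem (Finset.mem_insert_of_mem (H.head_mem e h))

/-- The free vertices of a subgraph. -/
def freeVerts (H : Subgraph G) : Finset V := H.verts \ G.fixed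

/-- The fixed vertices of a subgraph. -/
def fixedVerts (H : Subgraph G) : Finset V := H.verts ∩ G.fixed

end Subgraph

/-- The starting vertex of an oriented traversal of an edge. -/
def stepStart (G : GainedGraph V E Γ) (s : E × Bool) : V :=
  if s.2 then G.tail s.1 else G.head s.1

/-- The ending vertex of an oriented traversal of an edge. -/
def stepEnd (G : GainedGraph V E Γ) (s : E × Bool) : V :=
  if s.2 then G.head s.1 else G.tail s.1

/-- The gain contributed by an oriented traversal of an edge. -/
def stepGain (G : GainedGraph V E Γ) (s : E × Bool) : Γ :=
  if s.2 then G.gain s.1 else (G.gain s.1)⁻¹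

/-- `IsWalk G H L u w` : `L` is a walk in the subgraph `H` from `u` to `w`. -/
def IsWalk (G : GainedGraph V E Γ) (H : Subgraph G) : List (E × Bool) → V → V → Prop
  | [], u, w => u = w ∧ u ∈ H.verts
  | s :: L, u, w => s.1 ∈ H.edges ∧ stepStart G s = u ∧ IsWalk G H L (stepEnd G s) w

/-- The gain of a walk. -/
def walkGain (G : GainedGraph V E Γ) (L : List (E × Bool)) : Γ :=
  (L.map (stepGain G)).prod

/-- The vertices visited by a walk starting at `u`. -/
def walkVerts (G : GainedGraph V E Γ) (u : V) (L : List (E × Bool)) : List V :=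
  u :: L.map (stepEnd G)

/-- `⟨H⟩` : the subgroup of `Γ` generated by the gains of all closed walks in `H`
containing no fixed vertex. -/
def gainGroup (G : GainedGraph V E Γ) (H : Subgraph G) : Subgroup Γ :=
  Subgroup.closure
    {g | ∃ u L, IsWalk G H L u u ∧ (∀ x ∈ walkVerts G u L, x ∉ G.fixed) ∧ walkGain G L = g}

/-- A subgraph is balanced if its gain group is trivial. -/
def Balanced (G : GainedGraph V E Γ) (H : Subgraph G) : Prop := gainGroup G H = ⊥

def Reachable (G : GainedGraph V E Γ) (H : Subgraph G) (u w : V) : Prop :=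
  ∃ L, IsWalk G H L u w

def Connected (G : GainedGraph V E Γ) (H : Subgraph G) : Prop :=
  H.verts.Nonempty ∧ ∀ u ∈ H.verts, ∀ w ∈ H.verts, Reachable G H u w

/-- `v` is a cut-vertex of the subgraph `H`. -/
def IsCutVertex (G : GainedGraph V E Γ) (H : Subgraph G) (v : V) : Prop :=
  v ∈ H.verts ∧ ∃ u ∈ H.verts, ∃ w ∈ H.verts, u ≠ v ∧ w ≠ v ∧
    Reachable G H u w ∧ ¬ Reachable G (H.deleteVertex v) u w

/-- `(2,m,l)`-sparsity of the subgraph `K`. -/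
def Sparse (G : GainedGraph V E Γ) (m l : ℤ) (K : Subgraph G) : Prop :=
  ∀ H : Subgraph G, H ≤ K → H.edges.Nonempty →
    (H.edges.card : ℤ) ≤ 2 * (H.freeVerts.card : ℤ) + m * (H.fixedVerts.card : ℤ) - l

/-- `(2,m,l)`-tightness of the subgraph `K`. -/
def Tight (G : GainedGraph V E Γ) (m l : ℤ) (K : Subgraph G) : Prop :=
  Sparse G m l K ∧
    (K.edges.card : ℤ) = 2 * (K.freeVerts.card : ℤ) + m * (K.fixedVerts.card : ℤ) - l

/-- `(2,m,3,l)`-gain-tightness: `(2,m,l)`-tight and every balanced subgraph with a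
nonempty edge set is `(2,3)`-sparse. -/
def GainTight23 (G : GainedGraph V E Γ) (m l : ℤ) (K : Subgraph G) : Prop :=
  Tight G m l K ∧ ∀ H : Subgraph G, H ≤ K → H.edges.Nonempty → Balanced G H →
    (H.edges.card : ℤ) ≤ 2 * (H.verts.card : ℤ) - 3

/-- The subgraph has no fixed vertex. -/
def NoFixed (G : GainedGraph V E Γ) (H : Subgraph G) : Prop :=
  ∀ x ∈ H.verts, x ∉ G.fixed

/-- Near-balanced with base vertex `v` and gain `δ`: unbalanced, and every closed
walk starting at `v` not containing `v` as an internal vertex has gain `1`, `δ` or `δ⁻¹`. -/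
def NearBalancedAt (G : GainedGraph V E Γ) (H : Subgraph G) (v : V) (δ : Γ) : Prop :=
  ¬ Balanced G H ∧ ∀ L, IsWalk G H L v v →
    (∀ x ∈ (L.map (stepEnd G)).dropLast, x ≠ v) → walkGain G L ∈ ({1, δ, δ⁻¹} : Set Γ)

def NearBalanced (G : GainedGraph V E Γ) (H : Subgraph G) : Prop :=
  NoFixed G H ∧ ∃ v ∈ H.verts, ∃ δ : Γ, NearBalancedAt G H v δ

/-- The gain group of `H` is isomorphic to `ℤ_n`. -/
def IsZIso (G : GainedGraph V E Γ) (H : Subgraph G) (n : ℕ) : Prop :=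
  Nonempty (gainGroup G H ≃* Multiplicative (ZMod n))

def ProperNearBalanced (G : GainedGraph V E Γ) (H : Subgraph G) : Prop :=
  NearBalanced G H ∧ ¬ IsZIso G H 2 ∧ ¬ IsZIso G H 3

/-- The set `S_i(k,j)`. -/
def SSet (k j : ℕ) (i : ℤ) : Set ℕ :=
  {n | 2 ≤ n ∧ n ∣ k ∧ (Odd j → n ≠ 2) ∧ ((j : ZMod n) = (i : ZMod n))}

/-- `H` is `S_i(k,j)`. -/
def IsS (G : GainedGraph V E Γ) (k j : ℕ) (i : ℤ) (H : Subgraph G) : Prop :=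
  ∃ n ∈ SSet k j i, IsZIso G H n

/-- `H` is `S_{±1}(k,j)`. -/
def IsSpm (G : GainedGraph V E Γ) (k j : ℕ) (H : Subgraph G) : Prop :=
  IsS G k j (-1) H ∨ IsS G k j 1 H

/-- The function `α_k^j` on (connected) subgraphs. -/
noncomputable def alpha (G : GainedGraph V E Γ) (k j : ℕ) (X : Subgraph G) : ℤ :=
  if Balanced G X then 0
  else if Odd j ∧ IsZIso G X 2 then 1
  else if IsSpm G k j X then 2 - (X.fixedVerts.card : ℤ)
  else if IsS G k j 0 X ∨ (X.fixedVerts.card = 0 ∧ ProperNearBalanced G X) then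
    2 - 2 * (X.fixedVerts.card : ℤ)
  else 3 - 2 * (X.fixedVerts.card : ℤ)

/-- The subgraph spanned by a set of edges. -/
def edgeSpan (G : GainedGraph V E Γ) (F : Finset E) : Subgraph G where
  verts := F.image G.tail ∪ F.image G.head
  edges := F
  tail_mem e he := Finset.mem_union_left _ (Finset.mem_image_of_mem _ he)
  head_mem e he := Finset.mem_union_right _ (Finset.mem_image_of_mem _ he)

/-- The connected component of the edge `e` in the subgraph spanned by `F`. -/
noncomputable def componentOf (G : GainedGraph V E Γ) (F : Finset E) (e : E) : Subgraph G :=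
  edgeSpan G (F.filter fun f => Reachable G (edgeSpan G F) (G.tail e) (G.tail f))

/-- The connected components of the edge set `F`. -/
noncomputable def components (G : GainedGraph V E Γ) (F : Finset E) : Finset (Subgraph G) :=
  F.image (componentOf G F)

/-- The count `f_k^j(F) = Σ_{X ∈ C(F)} (2|V(X)| − 3 + α_k^j(X))`. -/
noncomputable def fCount (G : GainedGraph V E Γ) (k j : ℕ) (F : Finset E) : ℤ :=
  ∑ X ∈ components G F, (2 * (X.verts.card : ℤ) - 3 + alpha G k j X)

/-- `ℤ_k^j`-gain sparsity. -/
def GainSparseKJ (G : GainedGraph V E Γ) (k j : ℕ) (K : Subgraph G) : Prop :=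
  ∀ H : Subgraph G, H ≤ K → H.edges.Nonempty → (H.edges.card : ℤ) ≤ fCount G k j H.edges

/-- `ℤ_k^j`-gain tightness. -/
def GainTightKJ (G : GainedGraph V E Γ) (k j : ℕ) (K : Subgraph G) : Prop :=
  GainSparseKJ G k j K ∧ (K.edges.card : ℤ) = fCount G k j K.edges

/-- The degree of a vertex in a subgraph (a loop counts twice). -/
def degree (G : GainedGraph V E Γ) (K : Subgraph G) (v : V) : ℕ :=
  (K.edges.filter fun e => G.tail e = v).card + (K.edges.filter fun e => G.head e = v).card

def HasLoopAt (G : GainedGraph V E Γ) (K : Subgraph G) (v : V) : Prop :=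
  ∃ e ∈ K.edges, G.tail e = v ∧ G.head e = v

/-- The neighbours of a vertex in a subgraph. -/
def neighbors (G : GainedGraph V E Γ) (K : Subgraph G) (v : V) : Finset V :=
  ((K.edges.filter fun e => G.tail e = v).image G.head) ∪
    ((K.edges.filter fun e => G.head e = v).image G.tail)

/-- The subgraph `K` satisfies the axioms of a `Γ`-gain graph. -/
structure IsGainGraphOn (G : GainedGraph V E Γ) (K : Subgraph G) : Prop where
  fixed_card : K.fixedVerts.card ≤ 1
  same_dir : ∀ e ∈ K.edges, ∀ f ∈ K.edges, e ≠ f → G.tail e = G.tail f →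
    G.head e = G.head f → G.gain e ≠ G.gain f
  opp_dir : ∀ e ∈ K.edges, ∀ f ∈ K.edges, e ≠ f → G.tail e = G.head f →
    G.head e = G.tail f → G.gain e ≠ (G.gain f)⁻¹
  fixed_not_loop : ∀ e ∈ K.edges, G.tail e = G.head e → G.tail e ∉ G.fixed
  fixed_not_parallel : ∀ e ∈ K.edges, ∀ f ∈ K.edges, e ≠ f →
    (G.tail e ∈ G.fixed ∨ G.head e ∈ G.fixed) →
    ({G.tail e, G.head e} : Finset V) ≠ {G.tail f, G.head f}
  loop_gain : ∀ e ∈ K.edges, G.tail e = G.head e → G.gain e ≠ 1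

/-- `H` together with the vertex `v` and all edges of `G₀` incident to `v`. -/
def addVertexEdges (G : GainedGraph V E Γ) (G₀ H : Subgraph G) (v : V) : Subgraph G where
  verts := (H.verts ∪ {v}) ∪
    ((G₀.edges.filter fun e => G.tail e = v ∨ G.head e = v).image G.tail ∪
      (G₀.edges.filter fun e => G.tail e = v ∨ G.head e = v).image G.head)
  edges := H.edges ∪ G₀.edges.filter fun e => G.tail e = v ∨ G.head e = v
  tail_mem e he := by
    rcases Finset.mem_union.1 he with h | h
    · exact Finset.mem_union_left _ (Finset.mem_union_left _ (H.tail_mem e h))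
    · exact Finset.mem_union_right _ (Finset.mem_union_left _ (Finset.mem_image_of_mem _ h))
  head_mem e he := by
    rcases Finset.mem_union.1 he with h | h
    · exact Finset.mem_union_left _ (Finset.mem_union_left _ (H.head_mem e h))
    · exact Finset.mem_union_right _ (Finset.mem_union_right _ (Finset.mem_image_of_mem _ h))

/-- The result of a 1-reduction at `v` adding the edge `f`: delete `v` and all edges at
`v` and add the edge `f`. -/
def reduceAt (G : GainedGraph V E Γ) (G₀ : Subgraph G) (v : V) (f : E) : Subgraph G where
  verts := insert (G.tail f) (insert (G.head f) (G₀.verts.erase v))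
  edges := insert f (G₀.edges.filter fun e => G.tail e ≠ v ∧ G.head e ≠ v)
  tail_mem e he := by
    rcases Finset.mem_insert.1 he with rfl | h
    · exact Finset.mem_insert_self _ _
    · rcases Finset.mem_filter.1 h with ⟨h1, h2, h3⟩
      exact Finset.mem_insert_of_mem
        (Finset.mem_insert_of_mem (Finset.mem_erase.2 ⟨h2, G₀.tail_mem e h1⟩))
  head_mem e he := by
    rcases Finset.mem_insert.1 he with rfl | h
    · exact Finset.mem_insert_of_mem (Finset.mem_insert_self _ _)
    · rcases Finset.mem_filter.1 h with ⟨h1, h2, h3⟩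
      exact Finset.mem_insert_of_mem
        (Finset.mem_insert_of_mem (Finset.mem_erase.2 ⟨h3, G₀.head_mem e h1⟩))

/-- The new edge `f` arises from a 1-reduction at the vertex `v` of `G₀`: its endpoints are
joined to `v` by two distinct edges of `G₀` and its gain is the gain of the corresponding
path of length two through `v`. -/
def IsOneReduction (G : GainedGraph V E Γ) (G₀ : Subgraph G) (v : V) (f : E) : Prop :=
  f ∉ G₀.edges ∧ G.tail f ≠ v ∧ G.head f ≠ v ∧
    ∃ s₁ s₂ : E × Bool, s₁.1 ∈ G₀.edges ∧ s₂.1 ∈ G₀.edges ∧ s₁.1 ≠ s₂.1 ∧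
      stepEnd G s₁ = v ∧ stepStart G s₂ = v ∧
      G.tail f = stepStart G s₁ ∧ G.head f = stepEnd G s₂ ∧
      G.gain f = stepGain G s₁ * stepGain G s₂

/-- Two labelled edges coincide (up to reorientation with gain inversion). -/
def SameEdge (G : GainedGraph V E Γ) (e f : E) : Prop :=
  (G.tail e = G.tail f ∧ G.head e = G.head f ∧ G.gain e = G.gain f) ∨
    (G.tail e = G.head f ∧ G.head e = G.tail f ∧ G.gain e = (G.gain f)⁻¹)

/-- `H` is a blocker of the 1-reduction at `v` adding the edge `f`. -/
def IsBlocker (G : GainedGraph V E Γ) (k j : ℕ) (G₀ : Subgraph G) (v : V) (f : E)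
    (H : Subgraph G) : Prop :=
  H ≤ G₀ ∧ v ∉ H.verts ∧ G.tail f ∈ H.verts ∧ G.head f ∈ H.verts ∧ H.edges.Nonempty ∧
    Connected G (H.addEdge f) ∧
    (H.edges.card : ℤ) = 2 * (H.verts.card : ℤ) - 3 + alpha G k j (H.addEdge f)

/-- The graph `G` extended by one fresh edge `none` with tail `t`, head `h` and gain `g`. -/
def extendGraph (G : GainedGraph V E Γ) (t h : V) (g : Γ) : GainedGraph V (Option E) Γ where
  tail e := e.elim t G.tail
  head e := e.elim h G.head
  gain e := e.elim g G.gain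
  fixed := G.fixed

/-- The whole original graph `G`, viewed inside the extension. -/
def extendTop (G : GainedGraph V E Γ) (t h : V) (g : Γ) : Subgraph (extendGraph G t h g) where
  verts := Finset.univ
  edges := Finset.univ.image Option.some
  tail_mem _ _ := Finset.mem_univ _
  head_mem _ _ := Finset.mem_univ _

/-- There is an admissible 1-reduction at `v`, i.e. a choice of new edge (with
endpoints and gain coming from a path of length two through `v`) such that the
resulting `Γ`-gain graph is well defined and `ℤ_k^j`-gain tight. -/
def AdmissibleOneReductionExists (G : GainedGraph V E Γ) (k j : ℕ) (v : V) : Prop :=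
  ∃ t h : V, ∃ g : Γ,
    IsOneReduction (extendGraph G t h g) (extendTop G t h g) v none ∧
    IsGainGraphOn (extendGraph G t h g)
      (reduceAt (extendGraph G t h g) (extendTop G t h g) v none) ∧
    GainTightKJ (extendGraph G t h g) k j
      (reduceAt (extendGraph G t h g) (extendTop G t h g) v none)

end GR

/-!
Since `⟨H₁ ∩ H₂⟩` is a nontrivial subgroup of `⟨H₁⟩ ≅ ℤ_p`, the two are equal. For the union, cut
a closed walk of `H₁ ∪ H₂` avoiding the fixed vertex wherever it passes between `H₁` and `H₂`; those
passages are vertices of `H₁ ∩ H₂`, which remains connected once its fixed vertex (not a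
cut-vertex) is deleted. Closing each piece up inside `H₁ ∩ H₂` shows, as gains commute, that
`⟨H₁ ∪ H₂⟩ ≤ ⟨H₁⟩ ⊔ ⟨H₂⟩ = ⟨H₂⟩`.
-/

theorem Subgroup.eq_of_le_of_prime_card {Γ : Type*} [Group Γ] {K H : Subgroup Γ} (hKH : K ≤ H)
    (hp : (Nat.card H).Prime) (hK : K ≠ ⊥) : K = H := by
  have : Finite H := Nat.finite_of_card_ne_zero hp.ne_zero
  have hcard : Nat.card K ≠ 1 := fun h => hK (Subgroup.card_eq_one.1 h)
  exact Subgroup.eq_of_le_of_card_ge hKH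
    ((Nat.dvd_prime hp).1 (Subgroup.card_dvd_of_le hKH) |>.resolve_left hcard).ge

namespace GR

variable {V E Γ : Type} {G : GainedGraph V E Γ}

lemma stepStart_mem {H : Subgraph G} {s : E × Bool} (hs : s.1 ∈ H.edges) :
    stepStart G s ∈ H.verts := by
  unfold stepStart
  split
  exacts [H.tail_mem _ hs, H.head_mem _ hs]

lemma stepEnd_mem {H : Subgraph G} {s : E × Bool} (hs : s.1 ∈ H.edges) :
    stepEnd G s ∈ H.verts := by
  unfold stepEnd
  split
  exacts [H.head_mem _ hs, H.tail_mem _ hs]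

namespace IsWalk

variable {H K : Subgraph G}

lemma mono (hHK : H ≤ K) : ∀ {L : List (E × Bool)} {u w : V}, IsWalk G H L u w → IsWalk G K L u w
  | [], _, _, ⟨huw, hu⟩ => ⟨huw, hHK.1 hu⟩
  | _ :: _, _, _, ⟨hs, hu, hL⟩ => ⟨hHK.2 hs, hu, mono hHK hL⟩

lemma start_mem : ∀ {L : List (E × Bool)} {u w : V}, IsWalk G H L u w → u ∈ H.verts
  | [], _, _, ⟨_, hu⟩ => hu
  | _ :: _, _, _, ⟨hs, hu, _⟩ => hu ▸ stepStart_mem hs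

lemma end_mem : ∀ {L : List (E × Bool)} {u w : V}, IsWalk G H L u w → w ∈ H.verts
  | [], _, _, ⟨huw, hu⟩ => huw ▸ hu
  | _ :: _, _, _, ⟨_, _, hL⟩ => end_mem hL

lemma append : ∀ {L L' : List (E × Bool)} {u x w : V},
    IsWalk G H L u x → IsWalk G H L' x w → IsWalk G H (L ++ L') u w
  | [], _, _, _, _, ⟨rfl, _⟩, hL' => hL'
  | _ :: _, _, _, _, _, ⟨hs, hu, hL⟩, hL' => ⟨hs, hu, append hL hL'⟩

lemma walkVerts_subset : ∀ {L : List (E × Bool)} {u w : V}, IsWalk G H L u w →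
    ∀ x ∈ walkVerts G u L, x ∈ H.verts
  | [], _, _, ⟨_, hu⟩, _, hx => List.mem_singleton.1 hx ▸ hu
  | s :: _, _, _, ⟨hs, hu, hL⟩, x, hx => by
    rcases List.mem_cons.1 hx with rfl | hx
    · exact hu ▸ stepStart_mem hs
    · exact walkVerts_subset hL x hx

end IsWalk

lemma walkGain_append [Group Γ] (L L' : List (E × Bool)) :
    walkGain G (L ++ L') = walkGain G L * walkGain G L' := by
  simp [walkGain]

namespace Subgraph

@[ext]
lemma ext {H K : Subgraph G} (hv : H.verts = K.verts) (he : H.edges = K.edges) : H = K := by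
  cases H
  cases K
  cases hv
  cases he
  rfl

variable [DecidableEq V]

lemma inter_le_left [DecidableEq E] (H K : Subgraph G) : H.inter K ≤ H :=
  ⟨Finset.inter_subset_left, Finset.inter_subset_left⟩

lemma inter_le_right [DecidableEq E] (H K : Subgraph G) : H.inter K ≤ K :=
  ⟨Finset.inter_subset_right, Finset.inter_subset_right⟩

lemma le_union_right [DecidableEq E] (H K : Subgraph G) : K ≤ H.union K :=
  ⟨Finset.subset_union_right, Finset.subset_union_right⟩

/-- Passing to `freePart` turns walks avoiding fixed vertices into plain walks. -/
def freePart (H : Subgraph G) : Subgraph G where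
  verts := H.verts \ G.fixed
  edges := H.edges.filter fun e => G.tail e ∉ G.fixed ∧ G.head e ∉ G.fixed
  tail_mem e he := by
    obtain ⟨he, ht, -⟩ := Finset.mem_filter.1 he
    exact Finset.mem_sdiff.2 ⟨H.tail_mem e he, ht⟩
  head_mem e he := by
    obtain ⟨he, -, hh⟩ := Finset.mem_filter.1 he
    exact Finset.mem_sdiff.2 ⟨H.head_mem e he, hh⟩

lemma noFixed_freePart (H : Subgraph G) : NoFixed G H.freePart :=
  fun _ hx => (Finset.mem_sdiff.1 hx).2

lemma le_freePart {H : Subgraph G} (hH : NoFixed G H) : H ≤ H.freePart :=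
  ⟨fun x hx => Finset.mem_sdiff.2 ⟨hx, hH x hx⟩,
    fun e he => Finset.mem_filter.2 ⟨he, hH _ (H.tail_mem e he), hH _ (H.head_mem e he)⟩⟩

lemma deleteVertex_le_freePart {H : Subgraph G} {v : V} (hv : G.fixed ⊆ {v}) :
    H.deleteVertex v ≤ H.freePart := by
  have hfree : ∀ x, x ≠ v → x ∉ G.fixed := fun x hxv hx => hxv (Finset.mem_singleton.1 (hv hx))
  refine ⟨fun x hx => ?_, fun e he => ?_⟩
  · obtain ⟨hxv, hx⟩ := Finset.mem_erase.1 hx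
    exact Finset.mem_sdiff.2 ⟨hx, hfree x hxv⟩
  · obtain ⟨he, ht, hh⟩ := Finset.mem_filter.1 he
    exact Finset.mem_filter.2 ⟨he, hfree _ ht, hfree _ hh⟩

variable [DecidableEq E]

lemma freePart_union (H K : Subgraph G) : (H.union K).freePart = H.freePart.union K.freePart :=
  ext (Finset.union_sdiff_distrib _ _ _) (Finset.filter_union _ _ _)

lemma freePart_inter (H K : Subgraph G) : (H.inter K).freePart = H.freePart.inter K.freePart :=
  ext (by ext; simp only [freePart, inter, Finset.mem_sdiff, Finset.mem_inter]; tauto)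
    (Finset.filter_inter_distrib _ _ _)

end Subgraph

lemma isWalk_freePart_iff [DecidableEq V] {H : Subgraph G} :
    ∀ {L : List (E × Bool)} {u w : V},
      IsWalk G H.freePart L u w ↔ IsWalk G H L u w ∧ ∀ x ∈ walkVerts G u L, x ∉ G.fixed
  | [], u, w => by simp [IsWalk, walkVerts, Subgraph.freePart, and_assoc]
  | s :: L, u, w => by
    rw [IsWalk, IsWalk, isWalk_freePart_iff, Subgraph.freePart, Finset.mem_filter]
    simp only [walkVerts, List.map_cons, List.forall_mem_cons]
    rcases s with ⟨e, _ | _⟩ <;> simp only [stepStart, stepEnd, Bool.false_eq_true, if_false,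
      if_true] <;> grind

section GainGroup

variable [Group Γ] {H K : Subgraph G}

lemma gainGroup_mono (hHK : H ≤ K) : gainGroup G H ≤ gainGroup G K :=
  Subgroup.closure_mono fun _ ⟨u, L, hL, hfree, hg⟩ => ⟨u, L, hL.mono hHK, hfree, hg⟩

lemma IsWalk.walkGain_mem_gainGroup (hH : NoFixed G H) {L : List (E × Bool)} {u : V}
    (hL : IsWalk G H L u u) : walkGain G L ∈ gainGroup G H :=
  Subgroup.subset_closure ⟨u, L, hL, fun x hx => hH x (hL.walkVerts_subset x hx), rfl⟩

lemma gainGroup_freePart [DecidableEq V] (H : Subgraph G) :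
    gainGroup G H.freePart = gainGroup G H := by
  unfold gainGroup
  congr 1
  ext g
  constructor
  · rintro ⟨u, L, hL, hfree, hg⟩
    exact ⟨u, L, (isWalk_freePart_iff.1 hL).1, hfree, hg⟩
  · rintro ⟨u, L, hL, hfree, hg⟩
    exact ⟨u, L, isWalk_freePart_iff.2 ⟨hL, hfree⟩, hfree, hg⟩

end GainGroup

lemma reachable_freePart [DecidableEq V] {H : Subgraph G} (hc : Connected G H)
    (hcut : ∀ v ∈ G.fixed, ¬ IsCutVertex G H v) (hfix : G.fixed.card ≤ 1) {u w : V}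
    (hu : u ∈ H.freePart.verts) (hw : w ∈ H.freePart.verts) : Reachable G H.freePart u w := by
  obtain ⟨hu, huF⟩ := Finset.mem_sdiff.1 hu
  obtain ⟨hw, hwF⟩ := Finset.mem_sdiff.1 hw
  obtain ⟨L, hL⟩ := hc.2 u hu w hw
  by_cases hv : ∃ v ∈ G.fixed, v ∈ H.verts
  · obtain ⟨v, hvF, hvH⟩ := hv
    have hsub : G.fixed ⊆ {v} := fun x hx =>
      Finset.mem_singleton.2 (Finset.card_le_one.1 hfix x hx v hvF)
    have hreach : Reachable G (H.deleteVertex v) u w := by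
      by_contra h
      exact hcut v hvF ⟨hvH, u, hu, w, hw, (ne_of_mem_of_not_mem hvF huF).symm,
        (ne_of_mem_of_not_mem hvF hwF).symm, ⟨L, hL⟩, h⟩
    obtain ⟨M, hM⟩ := hreach
    exact ⟨M, hM.mono (Subgraph.deleteVertex_le_freePart hsub)⟩
  · exact ⟨L, hL.mono (Subgraph.le_freePart fun x hx hxF => hv ⟨x, hxF, hx⟩)⟩

section Union

variable [DecidableEq V] [DecidableEq E] {A B : Subgraph G}

lemma IsWalk.union_cases : ∀ {L : List (E × Bool)} {u w : V}, IsWalk G (A.union B) L u w →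
    IsWalk G A L u w ∨ IsWalk G B L u w ∨
      ∃ P Q x, L = P ++ Q ∧ P ≠ [] ∧ Q ≠ [] ∧ x ∈ (A.inter B).verts ∧
        IsWalk G (A.union B) P u x ∧ IsWalk G (A.union B) Q x w
  | [], _, _, ⟨huw, hu⟩ =>
    (Finset.mem_union.1 hu).imp (fun hu => ⟨huw, hu⟩) fun hu => Or.inl ⟨huw, hu⟩
  | s :: L, _, _, ⟨hs, hu, hL⟩ => by
    have hs' : IsWalk G (A.union B) [s] (stepStart G s) (stepEnd G s) :=
      ⟨hs, rfl, rfl, stepEnd_mem hs⟩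
    rcases union_cases hL with hLA | hLB | ⟨P, Q, x, rfl, -, hQ, hx, hP, hQw⟩
    · by_cases hsA : s.1 ∈ A.edges
      · exact Or.inl ⟨hsA, hu, hLA⟩
      have hsB : s.1 ∈ B.edges := (Finset.mem_union.1 hs).resolve_left hsA
      cases L with
      | nil => exact Or.inr (Or.inl ⟨hsB, hu, hLA.1, stepEnd_mem hsB⟩)
      | cons t L =>
        exact Or.inr (Or.inr ⟨[s], t :: L, _, rfl, List.cons_ne_nil _ _, List.cons_ne_nil _ _,
          Finset.mem_inter.2 ⟨hLA.start_mem, stepEnd_mem hsB⟩, hu ▸ hs', hL⟩)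
    · by_cases hsB : s.1 ∈ B.edges
      · exact Or.inr (Or.inl ⟨hsB, hu, hLB⟩)
      have hsA : s.1 ∈ A.edges := (Finset.mem_union.1 hs).resolve_right hsB
      cases L with
      | nil => exact Or.inl ⟨hsA, hu, hLB.1, stepEnd_mem hsA⟩
      | cons t L =>
        exact Or.inr (Or.inr ⟨[s], t :: L, _, rfl, List.cons_ne_nil _ _, List.cons_ne_nil _ _,
          Finset.mem_inter.2 ⟨stepEnd_mem hsA, hLB.start_mem⟩, hu ▸ hs', hL⟩)
    · exact Or.inr (Or.inr ⟨s :: P, Q, x, rfl, List.cons_ne_nil _ _, hQ, hx, ⟨hs, hu, hP⟩, hQw⟩)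

variable [CommGroup Γ]

/-- Cut `L` at a passage through `A ∩ B` and close up both pieces inside `A ∩ B`. -/
lemma walkGain_mul_mem_sup_of_isWalk_union (hA : NoFixed G A) (hB : NoFixed G B)
    (hI : ∀ u ∈ (A.inter B).verts, ∀ w ∈ (A.inter B).verts, Reachable G (A.inter B) u w)
    {L M : List (E × Bool)} {u w : V} (hL : IsWalk G (A.union B) L u w)
    (hM : IsWalk G (A.inter B) M w u) :
    walkGain G L * walkGain G M ∈ gainGroup G A ⊔ gainGroup G B := by
  induction hn : L.length using Nat.strong_induction_on generalizing L M u w with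
  | _ n ih =>
  rcases hL.union_cases with hLA | hLB | ⟨P, Q, x, rfl, hP, hQ, hx, hPw, hQw⟩
  · rw [← walkGain_append]
    exact Subgroup.mem_sup_left
      ((hLA.append (hM.mono (Subgraph.inter_le_left A B))).walkGain_mem_gainGroup hA)
  · rw [← walkGain_append]
    exact Subgroup.mem_sup_right
      ((hLB.append (hM.mono (Subgraph.inter_le_right A B))).walkGain_mem_gainGroup hB)
  · have hu : u ∈ (A.inter B).verts := hM.end_mem
    obtain ⟨R, hR⟩ := hI x hx u hu
    obtain ⟨S, hS⟩ := hI u hu x hx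
    have hP := List.length_pos_iff.2 hP
    have hQ := List.length_pos_iff.2 hQ
    rw [List.length_append] at hn
    have hPR := ih P.length (by omega) hPw hR rfl
    have hQMS := ih Q.length (by omega) hQw (hM.append hS) rfl
    have hRS : walkGain G R * walkGain G S ∈ gainGroup G A ⊔ gainGroup G B := by
      rw [← walkGain_append]
      exact Subgroup.mem_sup_left
        ((hR.append hS).mono (Subgraph.inter_le_left A B) |>.walkGain_mem_gainGroup hA)
    have hsplit : walkGain G (P ++ Q) * walkGain G M * (walkGain G R * walkGain G S) =
        walkGain G P * walkGain G R * (walkGain G Q * walkGain G (M ++ S)) := by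
      rw [walkGain_append, walkGain_append]
      ac_rfl
    rw [← Subgroup.mul_mem_cancel_right _ hRS, hsplit]
    exact mul_mem hPR hQMS

lemma walkGain_mem_sup_of_isWalk_union (hA : NoFixed G A) (hB : NoFixed G B)
    (hI : ∀ u ∈ (A.inter B).verts, ∀ w ∈ (A.inter B).verts, Reachable G (A.inter B) u w)
    {L : List (E × Bool)} {u : V} (hL : IsWalk G (A.union B) L u u) :
    walkGain G L ∈ gainGroup G A ⊔ gainGroup G B := by
  rcases hL.union_cases with hLA | hLB | ⟨P, Q, x, rfl, -, -, hx, hP, hQ⟩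
  · exact Subgroup.mem_sup_left (hLA.walkGain_mem_gainGroup hA)
  · exact Subgroup.mem_sup_right (hLB.walkGain_mem_gainGroup hB)
  · have := walkGain_mul_mem_sup_of_isWalk_union hA hB hI (hQ.append hP) (M := []) ⟨rfl, hx⟩
    rwa [show walkGain G [] = 1 from rfl, mul_one, walkGain_append, mul_comm,
      ← walkGain_append] at this

lemma gainGroup_union_le_sup (hA : NoFixed G A) (hB : NoFixed G B)
    (hI : ∀ u ∈ (A.inter B).verts, ∀ w ∈ (A.inter B).verts, Reachable G (A.inter B) u w) :
    gainGroup G (A.union B) ≤ gainGroup G A ⊔ gainGroup G B :=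
  (Subgroup.closure_le _).2 fun _ ⟨_, _, hL, _, hg⟩ =>
    hg ▸ walkGain_mem_sup_of_isWalk_union hA hB hI hL

theorem gainGroup_union_le_sup_of_connected_inter {H₁ H₂ : Subgraph G}
    (hc : Connected G (H₁.inter H₂))
    (hcut : ∀ v ∈ G.fixed, ¬ IsCutVertex G (H₁.inter H₂) v) (hfix : G.fixed.card ≤ 1) :
    gainGroup G (H₁.union H₂) ≤ gainGroup G H₁ ⊔ gainGroup G H₂ := by
  rw [← gainGroup_freePart, ← gainGroup_freePart H₁, ← gainGroup_freePart H₂,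
    Subgraph.freePart_union]
  refine gainGroup_union_le_sup (Subgraph.noFixed_freePart _) (Subgraph.noFixed_freePart _) ?_
  rw [← Subgraph.freePart_inter]
  exact fun u hu w hw => reachable_freePart hc hcut hfix hu hw

end Union

theorem union_with_prime_gain_group_general {V E : Type} [DecidableEq V] [DecidableEq E]
    [Fintype V] [Fintype E] (k : ℕ)
    (G : GainedGraph V E (Multiplicative (ZMod k)))
    (hG : IsGainGraphOn G (⊤ : Subgraph G))
    (H₁ H₂ : Subgraph G)
    (hcI : Connected G (H₁.inter H₂))
    (hcut : ∀ v ∈ G.fixed, ¬ IsCutVertex G (H₁.inter H₂) v)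
    (p : ℕ) (hp : p.Prime) (hiso : IsZIso G H₁ p)
    (hunbal : ¬ Balanced G (H₁.inter H₂)) :
    Nonempty (gainGroup G H₁ ≃* gainGroup G (H₁.inter H₂)) ∧
      Nonempty (gainGroup G H₂ ≃* gainGroup G (H₁.union H₂)) := by
  have hfix : G.fixed.card ≤ 1 := by
    simpa [Subgraph.fixedVerts, Top.top] using hG.fixed_card
  obtain ⟨e⟩ := hiso
  have hcard : Nat.card (gainGroup G H₁) = p := by
    rw [Nat.card_congr e.toEquiv]
    exact Nat.card_zmod p
  have h₁ : gainGroup G (H₁.inter H₂) = gainGroup G H₁ :=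
    Subgroup.eq_of_le_of_prime_card (gainGroup_mono (Subgraph.inter_le_left H₁ H₂))
      (hcard ▸ hp) hunbal
  have h₂ : gainGroup G H₂ = gainGroup G (H₁.union H₂) := by
    refine le_antisymm (gainGroup_mono (Subgraph.le_union_right H₁ H₂)) ?_
    calc gainGroup G (H₁.union H₂) ≤ gainGroup G H₁ ⊔ gainGroup G H₂ :=
          gainGroup_union_le_sup_of_connected_inter hcI hcut hfix
      _ = gainGroup G H₂ := sup_eq_right.2 (h₁ ▸ gainGroup_mono (Subgraph.inter_le_right H₁ H₂))
  exact ⟨⟨MulEquiv.subgroupCongr h₁.symm⟩, ⟨MulEquiv.subgroupCongr h₂⟩⟩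

/-- If `H₁, H₂` are connected subgraphs of a `Γ`-gain graph such that
`H₁ ∩ H₂` is connected with no fixed cut-vertex, `⟨H₁⟩ ≅ ℤ_p` for a prime `p`, and
`H₁ ∩ H₂` is unbalanced, then `⟨H₁⟩ ≅ ⟨H₁ ∩ H₂⟩` and `⟨H₂⟩ ≅ ⟨H₁ ∪ H₂⟩`. -/
theorem union_with_prime_gain_group {V E : Type} [DecidableEq V] [DecidableEq E]
    [Fintype V] [Fintype E] (k : ℕ) (hk : 0 < k)
    (G : GainedGraph V E (Multiplicative (ZMod k)))
    (hG : IsGainGraphOn G (⊤ : Subgraph G))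
    (H₁ H₂ : Subgraph G)
    (hc₁ : Connected G H₁) (hc₂ : Connected G H₂)
    (hcI : Connected G (H₁.inter H₂))
    (hcut : ∀ v ∈ G.fixed, ¬ IsCutVertex G (H₁.inter H₂) v)
    (p : ℕ) (hp : p.Prime) (hiso : IsZIso G H₁ p)
    (hunbal : ¬ Balanced G (H₁.inter H₂)) :
    Nonempty (gainGroup G H₁ ≃* gainGroup G (H₁.inter H₂)) ∧
      Nonempty (gainGroup G H₂ ≃* gainGroup G (H₁.union H₂)) :=
  union_with_prime_gain_group_general k G hG H₁ H₂ hcI hcut p hp hiso hunbal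

end GR
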